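/- For any sequence of instances of the binary voting model there exist a single strategy σ' = (β_l, β_h) ∈ [0,1]² and constants N₀ > 0 and φ > 0 such that, letting Σ'_N be the regular strategy profile in which every contingent agent plays σ' (friendly agents always vote A, unfriendly agents always vote R), one has A(Σ'_N) ≥ 1 − 2·exp(−2·φ²·N) for all N > N₀; in particular the fidelities A(Σ'_N) converge to 1. -/

import Mathlib

/-!
Let the agents that are neither friendly nor unfriendly all play `σ' = (β, β + δ)`. Each of them
then votes for `A` with probability `β + P_{hω} δ`, and by positive correlation `β, δ` can be tuned
so that this is `t - γ` in state `L` and `t + γ` in state `H`, where `t = (μ - α_F) / α_C` is the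
level at which the expected number of `A` votes is `μ N` up to rounding. The expected number of
`A` votes then misses `μ N` by a margin linear in `N`, downwards in state `L` and upwards in state
`H`, and a Chernoff bound for sums of independent Bernoulli variables makes both wrong outcomes
exponentially unlikely.
-/

namespace Voting

/-- The two world states: `L` (low) and `H` (high). -/
inductive WState : Type
  | L
  | H
deriving DecidableEq

instance : Fintype WState :=
  ⟨{WState.L, WState.H}, fun x => by cases x <;> simp⟩

/-- The two alternatives: `A` (accept) and `R` (reject). -/
inductive Alt : Type
  | A
  | R
deriving DecidableEq

instance : Fintype Alt :=
  ⟨{Alt.A, Alt.R}, fun x => by cases x <;> simp⟩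

/-- The shared parameters of a binary voting instance. -/
structure BParams where
  /-- majority threshold -/
  μ : ℝ
  hμ0 : 0 < μ
  hμ1 : μ < 1
  /-- prior of state `L` -/
  PL : ℝ
  /-- prior of state `H` -/
  PH : ℝ
  hPL : 0 < PL
  hPH : 0 < PH
  hPsum : PL + PH = 1
  /-- `Psig s ω` : probability of signal `s` in state `ω`; `true` is the signal `h`,
  `false` is the signal `l`. -/
  Psig : Bool → WState → ℝ
  hPsig : ∀ s ω, 0 ≤ Psig s ω
  hPsigsum : ∀ ω, Psig false ω + Psig true ω = 1
  /-- positive correlation: `P_{hH} > P_{hL}` -/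
  hcorr : Psig true WState.L < Psig true WState.H
  /-- upper bound of the utility functions -/
  B : ℕ
  hB : 0 < B

/-- A binary voting instance with `N` agents. -/
structure BInstance extends BParams where
  N : ℕ
  /-- the utility function of each agent -/
  u : Fin N → WState → Alt → ℕ
  hub : ∀ n ω a, u n ω a ≤ B
  huA : ∀ n, u n WState.L Alt.A < u n WState.H Alt.A
  huR : ∀ n, u n WState.H Alt.R < u n WState.L Alt.R

/-- A (mixed) strategy profile: for each agent, the probability of voting for `A`
upon each signal. -/
abbrev Profile (I : BInstance) : Type := Fin I.N → Bool → ℝ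

/-- All coordinates of the profile are genuine probabilities. -/
def ValidProfile (I : BInstance) (sp : Profile I) : Prop :=
  ∀ n s, 0 ≤ sp n s ∧ sp n s ≤ 1

/-- Probability that agent `n` votes for `A`, conditioned on the world state `ω`. -/
noncomputable def pA (I : BInstance) (sp : Profile I) (n : Fin I.N) (ω : WState) : ℝ :=
  I.Psig false ω * sp n false + I.Psig true ω * sp n true

open Finset in
/-- `lambdaA I sp ω` : the probability that at least `μ·N` agents vote for `A`,
conditioned on the world state `ω` (conditionally on the state, the votes are independent,
agent `n` voting for `A` with probability `pA I sp n ω`). -/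
noncomputable def lambdaA (I : BInstance) (sp : Profile I) (ω : WState) : ℝ :=
  ∑ v : Fin I.N → Bool,
    if I.μ * (I.N : ℝ) ≤ ((univ.filter fun n => v n = true).card : ℝ) then
      ∏ n, (if v n = true then pA I sp n ω else 1 - pA I sp n ω)
    else 0

/-- The fidelity of a strategy profile: the probability that the informed majority
decision is reached. -/
noncomputable def fid (I : BInstance) (sp : Profile I) : ℝ :=
  I.PL * (1 - lambdaA I sp WState.L) + I.PH * lambdaA I sp WState.H

/-- The ex-ante expected utility of agent `n` under profile `sp`. -/
noncomputable def ut (I : BInstance) (sp : Profile I) (n : Fin I.N) : ℝ :=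
  I.PL * (lambdaA I sp WState.L * (I.u n WState.L Alt.A : ℝ)
      + (1 - lambdaA I sp WState.L) * (I.u n WState.L Alt.R : ℝ))
    + I.PH * (lambdaA I sp WState.H * (I.u n WState.H Alt.A : ℝ)
      + (1 - lambdaA I sp WState.H) * (I.u n WState.H Alt.R : ℝ))

/-- A friendly agent prefers `A` in both states. -/
def Friendly (I : BInstance) (n : Fin I.N) : Prop :=
  ∀ ω, I.u n ω Alt.R < I.u n ω Alt.A

/-- An unfriendly agent prefers `R` in both states. -/
def Unfriendly (I : BInstance) (n : Fin I.N) : Prop :=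
  ∀ ω, I.u n ω Alt.A < I.u n ω Alt.R

/-- A contingent agent prefers `A` in state `H` and `R` in state `L`. -/
def Contingent (I : BInstance) (n : Fin I.N) : Prop :=
  I.u n WState.H Alt.R < I.u n WState.H Alt.A ∧ I.u n WState.L Alt.A < I.u n WState.L Alt.R

/-- A profile is regular if every friendly agent always votes for `A` and every
unfriendly agent always votes for `R`. -/
def Regular (I : BInstance) (sp : Profile I) : Prop :=
  (∀ n, Friendly I n → ∀ s, sp n s = 1) ∧ (∀ n, Unfriendly I n → ∀ s, sp n s = 0)

/-- `ε`-strong Bayes Nash Equilibrium: no coalition `D` can deviate so that no member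
is worse off and some member gains more than `ε`. -/
def IsEpsBNE (I : BInstance) (sp : Profile I) (ε : ℝ) : Prop :=
  ¬ ∃ (D : Set (Fin I.N)) (sp' : Profile I),
      ValidProfile I sp' ∧
      (∀ n, n ∉ D → sp' n = sp n) ∧
      (∀ n ∈ D, ut I sp n ≤ ut I sp' n) ∧
      (∃ n ∈ D, ut I sp n + ε < ut I sp' n)

/-- Number of friendly agents. -/
noncomputable def friendlyCount (I : BInstance) : ℕ := {n | Friendly I n}.ncard

/-- Number of unfriendly agents. -/
noncomputable def unfriendlyCount (I : BInstance) : ℕ := {n | Unfriendly I n}.ncard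

/-- Number of contingent agents. -/
noncomputable def contingentCount (I : BInstance) : ℕ := {n | Contingent I n}.ncard

/-- A sequence of binary voting instances sharing the same parameters, in which the
instance indexed by `N` has `N` agents. -/
structure BSeq where
  params : BParams
  inst : ℕ → BInstance
  hN : ∀ N, (inst N).N = N
  hshare : ∀ N, (inst N).toBParams = params

/-- A sequence of binary voting instances with fixed approximate fractions
`(αF, αU, αC)` of friendly, unfriendly and contingent agents. -/
structure BSeqFrac extends BSeq where
  αF : ℝ
  αU : ℝ
  αC : ℝ
  hαF0 : 0 ≤ αF
  hαU0 : 0 ≤ αU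
  hαC0 : 0 ≤ αC
  hαsum : αF + αU + αC = 1
  hαFμ : αF < params.μ
  hαUμ : αU < 1 - params.μ
  hNF : ∀ N : ℕ, friendlyCount (inst N) = ⌊αF * (N : ℝ)⌋₊
  hNU : ∀ N : ℕ, unfriendlyCount (inst N) = ⌊αU * (N : ℝ)⌋₊
  hNC : ∀ N : ℕ, contingentCount (inst N) = N - ⌊αF * (N : ℝ)⌋₊ - ⌊αU * (N : ℝ)⌋₊

open Classical in
/-- The regular strategy profile in which every contingent agent plays `σ'`,
every friendly agent always votes for `A` and every unfriendly agent always
votes for `R`. -/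
noncomputable def devProfile (S : BSeqFrac) (σ' : Bool → ℝ) (N : ℕ) :
    Profile (S.inst N) := fun n s =>
  if Friendly (S.inst N) n then 1 else if Unfriendly (S.inst N) n then 0 else σ' s

open Finset Real Filter Topology

lemma tendsto_one_sub_two_mul_exp_mul_natCast {c : ℝ} (hc : c < 0) :
    Tendsto (fun N : ℕ => 1 - 2 * exp (c * N)) atTop (𝓝 1) := by
  have h := tendsto_exp_atBot.comp (tendsto_natCast_atTop_atTop.const_mul_atTop_of_neg hc)
  simpa using tendsto_const_nhds.sub (h.const_mul 2)

section Bernoulli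

variable {ι : Type*} [Fintype ι] (p : ι → ℝ)

noncomputable def bernWeight (v : ι → Bool) : ℝ :=
  ∏ i, if v i = true then p i else 1 - p i

variable {p} in
lemma bernWeight_nonneg (hp : ∀ i, p i ∈ Set.Icc 0 1) (v : ι → Bool) : 0 ≤ bernWeight p v :=
  prod_nonneg fun i _ => by
    split
    · exact (hp i).1
    · linarith [(hp i).2]

variable [DecidableEq ι]

noncomputable def upperTail (a : ℝ) : ℝ :=
  ∑ v : ι → Bool, if a ≤ (#{i | v i = true} : ℝ) then bernWeight p v else 0

noncomputable def lowerTail (a : ℝ) : ℝ :=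
  ∑ v : ι → Bool, if (#{i | v i = true} : ℝ) < a then bernWeight p v else 0

lemma sum_prod_apply_bool (f : ι → Bool → ℝ) :
    ∑ v : ι → Bool, ∏ i, f i (v i) = ∏ i, (f i false + f i true) := by
  simp only [← Fintype.prod_sum, Fintype.sum_bool, add_comm]

lemma sum_bernWeight : ∑ v : ι → Bool, bernWeight p v = 1 := by
  simp only [bernWeight, sum_prod_apply_bool (fun i b => if b = true then p i else 1 - p i)]
  simp

lemma sum_exp_mul_card_mul_bernWeight (s : ℝ) :
    ∑ v : ι → Bool, exp (s * #{i | v i = true}) * bernWeight p v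
      = ∏ i, (1 + p i * (exp s - 1)) := by
  have hv : ∀ v : ι → Bool, exp (s * #{i | v i = true}) * bernWeight p v
      = ∏ i, (if v i = true then exp s * p i else 1 - p i) := by
    intro v
    rw [card_filter, Nat.cast_sum, mul_sum, exp_sum, bernWeight, ← prod_mul_distrib]
    refine prod_congr rfl fun i _ => ?_
    split <;> simp
  simp only [hv, sum_prod_apply_bool (fun i b => if b = true then exp s * p i else 1 - p i)]
  refine prod_congr rfl fun i _ => ?_
  simp only [Bool.false_eq_true, if_false, if_true]
  ring

lemma upperTail_add_lowerTail (a : ℝ) : upperTail p a + lowerTail p a = 1 := by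
  rw [upperTail, lowerTail, ← sum_add_distrib, ← sum_bernWeight p]
  refine sum_congr rfl fun v _ => ?_
  by_cases h : a ≤ (#{i | v i = true} : ℝ)
  · simp [h]
  · simp [h, not_le.1 h]

lemma one_sub_upperTail (a : ℝ) : 1 - upperTail p a = lowerTail p a := by
  rw [← upperTail_add_lowerTail p a]; ring

variable {p}

lemma upperTail_nonneg (hp : ∀ i, p i ∈ Set.Icc 0 1) (a : ℝ) : 0 ≤ upperTail p a :=
  sum_nonneg fun v _ => ite_nonneg (bernWeight_nonneg hp v) le_rfl

lemma lowerTail_nonneg (hp : ∀ i, p i ∈ Set.Icc 0 1) (a : ℝ) : 0 ≤ lowerTail p a :=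
  sum_nonneg fun v _ => ite_nonneg (bernWeight_nonneg hp v) le_rfl

lemma upperTail_le_one (hp : ∀ i, p i ∈ Set.Icc 0 1) (a : ℝ) : upperTail p a ≤ 1 := by
  linarith [upperTail_add_lowerTail p a, lowerTail_nonneg hp a]

lemma sum_exp_mul_sub_mul_bernWeight_le (hp : ∀ i, p i ∈ Set.Icc 0 1) {s : ℝ} (hs : |s| ≤ 1)
    (a : ℝ) :
    ∑ v : ι → Bool, exp (s * (#{i | v i = true} - a)) * bernWeight p v
      ≤ exp (s * (∑ i, p i - a) + s ^ 2 * Fintype.card ι) := by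
  have hsum : ∑ v : ι → Bool, exp (s * (#{i | v i = true} - a)) * bernWeight p v
      = exp (-(s * a)) * ∏ i, (1 + p i * (exp s - 1)) := by
    rw [← sum_exp_mul_card_mul_bernWeight, mul_sum]
    refine sum_congr rfl fun v _ => ?_
    rw [← mul_assoc, ← exp_add]
    ring_nf
  have hprod : ∏ i, (1 + p i * (exp s - 1)) ≤ exp ((exp s - 1) * ∑ i, p i) := by
    rw [mul_sum, exp_sum]
    refine prod_le_prod (fun i _ => ?_) fun i _ => ?_
    · nlinarith [(hp i).1, (hp i).2, exp_pos s]
    · linarith [add_one_le_exp ((exp s - 1) * p i), mul_comm (p i) (exp s - 1)]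
  have hexp : exp s - 1 ≤ s + s ^ 2 := by
    linarith [le_abs_self (exp s - 1 - s), abs_exp_sub_one_sub_id_le hs]
  have hmean : ∑ i, p i ≤ Fintype.card ι := by
    simpa using sum_le_sum fun i (_ : i ∈ univ) => (hp i).2
  have hmean0 : 0 ≤ ∑ i, p i := sum_nonneg fun i _ => (hp i).1
  calc ∑ v : ι → Bool, exp (s * (#{i | v i = true} - a)) * bernWeight p v
      ≤ exp (-(s * a)) * exp ((exp s - 1) * ∑ i, p i) := by
        rw [hsum]; exact mul_le_mul_of_nonneg_left hprod (exp_pos _).le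
    _ = exp (-(s * a) + (exp s - 1) * ∑ i, p i) := (exp_add _ _).symm
    _ ≤ _ := exp_le_exp.2 <| by
        nlinarith [mul_le_mul_of_nonneg_right hexp hmean0,
          mul_le_mul_of_nonneg_left hmean (sq_nonneg s)]

lemma upperTail_le_exp (hp : ∀ i, p i ∈ Set.Icc 0 1) {a ε : ℝ} (hε0 : 0 ≤ ε) (hε2 : ε ≤ 2)
    (ha : ∑ i, p i + ε * Fintype.card ι ≤ a) :
    upperTail p a ≤ exp (-(ε ^ 2 / 4) * Fintype.card ι) := by
  have hs : |ε / 2| ≤ 1 := by rw [abs_of_nonneg (by positivity)]; linarith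
  calc upperTail p a
      ≤ ∑ v : ι → Bool, exp (ε / 2 * (#{i | v i = true} - a)) * bernWeight p v := by
        refine sum_le_sum fun v _ => ?_
        split
        · exact le_mul_of_one_le_left (bernWeight_nonneg hp v) (one_le_exp (by nlinarith))
        · exact mul_nonneg (exp_pos _).le (bernWeight_nonneg hp v)
    _ ≤ exp (ε / 2 * (∑ i, p i - a) + (ε / 2) ^ 2 * Fintype.card ι) :=
        sum_exp_mul_sub_mul_bernWeight_le hp hs a
    _ ≤ exp (-(ε ^ 2 / 4) * Fintype.card ι) := exp_le_exp.2 (by nlinarith)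

lemma lowerTail_le_exp (hp : ∀ i, p i ∈ Set.Icc 0 1) {a ε : ℝ} (hε0 : 0 ≤ ε) (hε2 : ε ≤ 2)
    (ha : a + ε * Fintype.card ι ≤ ∑ i, p i) :
    lowerTail p a ≤ exp (-(ε ^ 2 / 4) * Fintype.card ι) := by
  have hs : |-(ε / 2)| ≤ 1 := by rw [abs_neg, abs_of_nonneg (by positivity)]; linarith
  calc lowerTail p a
      ≤ ∑ v : ι → Bool, exp (-(ε / 2) * (#{i | v i = true} - a)) * bernWeight p v := by
        refine sum_le_sum fun v _ => ?_
        split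
        · exact le_mul_of_one_le_left (bernWeight_nonneg hp v) (one_le_exp (by nlinarith))
        · exact mul_nonneg (exp_pos _).le (bernWeight_nonneg hp v)
    _ ≤ exp (-(ε / 2) * (∑ i, p i - a) + (-(ε / 2)) ^ 2 * Fintype.card ι) :=
        sum_exp_mul_sub_mul_bernWeight_le hp hs a
    _ ≤ exp (-(ε ^ 2 / 4) * Fintype.card ι) := exp_le_exp.2 (by nlinarith)

end Bernoulli

noncomputable def BParams.voteProb (P : BParams) (σ : Bool → ℝ) (ω : WState) : ℝ :=
  P.Psig false ω * σ false + P.Psig true ω * σ true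

lemma BParams.voteProb_mem (P : BParams) {σ : Bool → ℝ} (hσ : ∀ s, 0 ≤ σ s ∧ σ s ≤ 1)
    (ω : WState) : P.voteProb σ ω ∈ Set.Icc 0 1 := by
  obtain ⟨hl0, hl1⟩ := hσ false
  obtain ⟨hh0, hh1⟩ := hσ true
  have hl := P.hPsig false ω
  have hh := P.hPsig true ω
  constructor
  · unfold BParams.voteProb; positivity
  · unfold BParams.voteProb
    linarith [P.hPsigsum ω, mul_le_of_le_one_right hl hl1, mul_le_of_le_one_right hh hh1]

lemma BParams.exists_voteProb_eq (P : BParams) {t : ℝ} (ht0 : 0 < t) (ht1 : t < 1) :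
    ∃ σ : Bool → ℝ, (∀ s, 0 ≤ σ s ∧ σ s ≤ 1) ∧
      ∃ γ > 0, P.voteProb σ .L = t - γ ∧ P.voteProb σ .H = t + γ := by
  set pL := P.Psig true .L
  set pH := P.Psig true .H
  have hpL : 0 ≤ pL := P.hPsig true .L
  have hpH : pH ≤ 1 := by linarith [P.hPsigsum .H, P.hPsig false .H]
  have hcorr : pL < pH := P.hcorr
  set δ := min t (1 - t)
  have hδ : 0 < δ := lt_min ht0 (by linarith)
  have hδt : δ ≤ t := min_le_left _ _
  have hδt' : δ ≤ 1 - t := min_le_right _ _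
  set β := t - (pL + pH) / 2 * δ with hβ
  have hβ0 : 0 ≤ β := by
    have : (pL + pH) / 2 * δ ≤ δ := mul_le_of_le_one_left hδ.le (by linarith)
    linarith
  have hβ1 : β + δ ≤ 1 := by
    have : 0 ≤ (pL + pH) / 2 * δ := mul_nonneg (by linarith) hδ.le
    linarith
  have hvote : ∀ ω, P.voteProb (fun s => cond s (β + δ) β) ω = β + P.Psig true ω * δ := by
    intro ω
    simp only [BParams.voteProb, cond_true, cond_false]
    linear_combination β * P.hPsigsum ω
  refine ⟨fun s => cond s (β + δ) β, fun s => ?_, (pH - pL) / 2 * δ, by nlinarith, ?_, ?_⟩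
  · cases s <;> simp only [cond_true, cond_false] <;> constructor <;> linarith
  · rw [hvote]; ring
  · rw [hvote]; ring

lemma pA_mem {I : BInstance} {sp : Profile I} (h : ValidProfile I sp) (n : Fin I.N)
    (ω : WState) : pA I sp n ω ∈ Set.Icc 0 1 :=
  I.voteProb_mem (h n) ω

lemma lambdaA_eq_upperTail (I : BInstance) (sp : Profile I) (ω : WState) :
    lambdaA I sp ω = upperTail (fun n => pA I sp n ω) (I.μ * I.N) :=
  rfl

lemma fid_le_one {I : BInstance} {sp : Profile I} (h : ValidProfile I sp) : fid I sp ≤ 1 := by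
  rw [fid, lambdaA_eq_upperTail, lambdaA_eq_upperTail]
  have hL := upperTail_nonneg (fun n => pA_mem h n .L) (I.μ * I.N)
  have hH := upperTail_le_one (fun n => pA_mem h n .H) (I.μ * I.N)
  nlinarith [I.hPL, I.hPH, I.hPsum]

lemma one_sub_le_fid {I : BInstance} {sp : Profile I} {e : ℝ} (hL : lambdaA I sp .L ≤ e)
    (hH : 1 - lambdaA I sp .H ≤ e) : 1 - e ≤ fid I sp :=
  calc 1 - e = I.PL * (1 - e) + I.PH * (1 - e) := by linear_combination (e - 1) * I.hPsum
    _ ≤ fid I sp := add_le_add (mul_le_mul_of_nonneg_left (by linarith) I.hPL.le)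
        (mul_le_mul_of_nonneg_left (by linarith) I.hPH.le)

lemma Friendly.not_unfriendly {I : BInstance} {n : Fin I.N} (h : Friendly I n) :
    ¬ Unfriendly I n :=
  fun hU => lt_asymm (h .H) (hU .H)

lemma card_filter_friendly (I : BInstance) [DecidablePred (Friendly I)] :
    #{n | Friendly I n} = friendlyCount I := by
  rw [friendlyCount, Set.ncard_eq_toFinset_card', Set.toFinset_ofPred]

lemma card_filter_unfriendly (I : BInstance) [DecidablePred (Unfriendly I)] :
    #{n | Unfriendly I n} = unfriendlyCount I := by
  rw [unfriendlyCount, Set.ncard_eq_toFinset_card', Set.toFinset_ofPred]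

namespace BSeqFrac

variable (S : BSeqFrac)

noncomputable def numContingent (N : ℕ) : ℝ := N - ⌊S.αF * N⌋₊ - ⌊S.αU * N⌋₊

noncomputable def pivotProb : ℝ := (S.params.μ - S.αF) / S.αC

lemma αC_pos : 0 < S.αC := by
  linarith [S.hαsum, S.hαFμ, S.hαUμ]

lemma pivotProb_pos : 0 < S.pivotProb :=
  div_pos (by linarith [S.hαFμ]) S.αC_pos

lemma pivotProb_lt_one : S.pivotProb < 1 :=
  (div_lt_one S.αC_pos).2 (by linarith [S.hαsum, S.hαUμ])

lemma αC_mul_pivotProb : S.αC * S.pivotProb = S.params.μ - S.αF :=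
  mul_div_cancel₀ _ S.αC_pos.ne'

lemma numContingent_mem (N : ℕ) :
    S.numContingent N ∈ Set.Icc (S.αC * N) (S.αC * N + 2) := by
  have hN : (0 : ℝ) ≤ N := N.cast_nonneg
  have hF := Nat.floor_le (mul_nonneg S.hαF0 hN)
  have hU := Nat.floor_le (mul_nonneg S.hαU0 hN)
  have hF' := Nat.sub_one_lt_floor (S.αF * N)
  have hU' := Nat.sub_one_lt_floor (S.αU * N)
  have hα : S.αC = 1 - S.αF - S.αU := by linarith [S.hαsum]
  rw [numContingent, hα]
  constructor <;> nlinarith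

lemma floor_add_numContingent_mul_le {γ : ℝ} (hγ : 0 ≤ γ) (N : ℕ) :
    ⌊S.αF * N⌋₊ + S.numContingent N * (S.pivotProb - γ)
      ≤ S.params.μ * N - S.αC * γ * N + 2 := by
  obtain ⟨hK, hK'⟩ := S.numContingent_mem N
  have hF := Nat.floor_le (mul_nonneg S.hαF0 N.cast_nonneg)
  have := mul_le_mul_of_nonneg_right hK' S.pivotProb_pos.le
  have := mul_le_mul_of_nonneg_right hK hγ
  nlinarith [S.αC_mul_pivotProb, S.pivotProb_lt_one]

lemma le_floor_add_numContingent_mul {γ : ℝ} (hγ : 0 ≤ γ) (N : ℕ) :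
    S.params.μ * N + S.αC * γ * N - 1
      ≤ ⌊S.αF * N⌋₊ + S.numContingent N * (S.pivotProb + γ) := by
  obtain ⟨hK, -⟩ := S.numContingent_mem N
  have hF := Nat.sub_one_lt_floor (S.αF * N)
  have := mul_le_mul_of_nonneg_right hK (add_nonneg S.pivotProb_pos.le hγ)
  nlinarith [S.αC_mul_pivotProb]

lemma devProfile_valid {σ : Bool → ℝ} (hσ : ∀ s, 0 ≤ σ s ∧ σ s ≤ 1) (N : ℕ) :
    ValidProfile (S.inst N) (devProfile S σ N) := by
  intro n s
  unfold devProfile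
  split_ifs
  · exact ⟨zero_le_one, le_rfl⟩
  · exact ⟨le_rfl, zero_le_one⟩
  · exact hσ s

lemma sum_pA_devProfile (σ : Bool → ℝ) (N : ℕ) (ω : WState) :
    ∑ n, pA (S.inst N) (devProfile S σ N) n ω
      = ⌊S.αF * N⌋₊ + S.numContingent N * S.params.voteProb σ ω := by
  classical
  set I := S.inst N
  have hpt : ∀ n, pA I (devProfile S σ N) n ω
      = (if Friendly I n then 1 else 0)
        + (1 - (if Friendly I n then 1 else 0) - (if Unfriendly I n then 1 else 0))
          * I.voteProb σ ω := by
    intro n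
    by_cases hF : Friendly I n
    · simp [pA, devProfile, I, hF, hF.not_unfriendly, (S.inst N).hPsigsum ω]
    · by_cases hU : Unfriendly I n
      · simp [pA, devProfile, I, hF, hU]
      · simp [pA, devProfile, I, hF, hU, BParams.voteProb]
  rw [sum_congr rfl fun n _ => hpt n, sum_add_distrib, ← sum_mul, sum_sub_distrib,
    sum_sub_distrib, sum_boole, sum_boole, sum_const, card_univ, Fintype.card_fin,
    card_filter_friendly, card_filter_unfriendly, S.hNF, S.hNU, S.hN, S.hshare, numContingent]
  simp

lemma one_sub_exp_le_fid {σ : Bool → ℝ} (hσ : ∀ s, 0 ≤ σ s ∧ σ s ≤ 1) {γ : ℝ}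
    (hL : S.params.voteProb σ .L = S.pivotProb - γ)
    (hH : S.params.voteProb σ .H = S.pivotProb + γ) {ε : ℝ} (hε : 0 ≤ ε)
    (hεγ : 2 * ε ≤ S.αC * γ) {N : ℕ} (hN : 2 ≤ ε * N) :
    1 - exp (-(ε ^ 2 / 4) * N) ≤ fid (S.inst N) (devProfile S σ N) := by
  have hγ : 0 ≤ γ := (mul_nonneg_iff_of_pos_left S.αC_pos).1 (by linarith)
  have hε2 : ε ≤ 2 := by
    have hγt : γ ≤ S.pivotProb := by linarith [(S.params.voteProb_mem hσ .L).1]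
    nlinarith [S.hαF0, S.hαU0, S.hαsum, S.pivotProb_lt_one]
  have hp := fun ω n => pA_mem (S.devProfile_valid hσ N) n ω
  have hcard : (Fintype.card (Fin (S.inst N).N) : ℝ) = N := by rw [Fintype.card_fin, S.hN]
  have hμ : (S.inst N).μ * (S.inst N).N = S.params.μ * N := by rw [S.hN, S.hshare]
  have hmargin : ε * N ≤ S.αC * γ * N - ε * N := by nlinarith
  apply one_sub_le_fid
  · rw [lambdaA_eq_upperTail, hμ]
    refine (upperTail_le_exp (hp .L) hε hε2 ?_).trans_eq (by rw [hcard])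
    rw [hcard, S.sum_pA_devProfile, hL]
    linarith [S.floor_add_numContingent_mul_le hγ N]
  · rw [lambdaA_eq_upperTail, hμ, one_sub_upperTail]
    refine (lowerTail_le_exp (hp .H) hε hε2 ?_).trans_eq (by rw [hcard])
    rw [hcard, S.sum_pA_devProfile, hH]
    linarith [S.le_floor_add_numContingent_mul hγ N]

end BSeqFrac

/-- Theorem 3 of the paper. For any sequence of instances there are a
single valid strategy `σ'` and constants `N₀ > 0`, `φ > 0` such that the regular profile
in which every contingent agent plays `σ'` has fidelity at least `1 - 2·exp(-2·φ²·N)`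
for all `N > N₀`; in particular the fidelities converge to `1`. -/
theorem exists_high_fidelity_deviation (S : BSeqFrac) :
    ∃ σ' : Bool → ℝ, (∀ s, 0 ≤ σ' s ∧ σ' s ≤ 1) ∧
      ∃ (N₀ : ℕ) (φ : ℝ), 0 < N₀ ∧ 0 < φ ∧
        (∀ N : ℕ, N₀ < N →
          1 - 2 * Real.exp (-2 * φ ^ 2 * (N : ℝ)) ≤ fid (S.inst N) (devProfile S σ' N)) ∧
        Filter.Tendsto (fun N => fid (S.inst N) (devProfile S σ' N)) Filter.atTop (nhds 1) := by
  obtain ⟨σ, hσ, γ, hγ, hL, hH⟩ := S.params.exists_voteProb_eq S.pivotProb_pos S.pivotProb_lt_one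
  set ε := S.αC * γ / 2 with hε_def
  have hε : 0 < ε := by have := S.αC_pos; positivity
  have hlow : ∀ N : ℕ, ⌈2 / ε⌉₊ < N →
      1 - 2 * exp (-2 * (ε / 4) ^ 2 * N) ≤ fid (S.inst N) (devProfile S σ N) := by
    intro N hN
    have h2 : 2 ≤ ε * N := by
      have := Nat.lt_of_ceil_lt hN
      rw [div_lt_iff₀ hε] at this
      linarith
    have hexp : exp (-(ε ^ 2 / 4) * N) ≤ exp (-2 * (ε / 4) ^ 2 * N) :=
      exp_le_exp.2 (by nlinarith [N.cast_nonneg (α := ℝ)])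
    linarith [S.one_sub_exp_le_fid hσ hL hH hε.le (by linarith [hε_def]) h2,
      exp_pos (-2 * (ε / 4) ^ 2 * N)]
  refine ⟨σ, hσ, ⌈2 / ε⌉₊, ε / 4, Nat.ceil_pos.2 (by positivity), by positivity, hlow, ?_⟩
  exact tendsto_of_tendsto_of_tendsto_of_le_of_le'
    (tendsto_one_sub_two_mul_exp_mul_natCast (by nlinarith)) tendsto_const_nhds
    ((eventually_gt_atTop _).mono hlow)
    (Eventually.of_forall fun N => fid_le_one (S.devProfile_valid hσ N))

end Voting
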